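/- arXiv:2407.18150 — 7 statements merged into one kernel-verified Lean document; each statement's English description precedes it below -/
import Mathlib

section
/- Let g ∈ ℝⁿ, let î ∈ {1,…,n} be an index maximizing |g_i| over i = 1,…,n, and let I ⊆ {1,…,n} be any set of indices containing î. Then ‖g_I‖ ≥ (n + 1 − |I|)^{−1/2} ‖g‖, where g_I denotes the subvector of g with entries indexed by I and ‖·‖ is the Euclidean norm. -/
open scoped RealInnerProductSpace

noncomputable section

/-- `U_I`: extension by zero from block coordinates to full coordinates. -/
def blockIncl {n : ℕ} (I : Finset (Fin n)) :
    EuclideanSpace ℝ ↥I →ₗ[ℝ] EuclideanSpace ℝ (Fin n) where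
  toFun s := WithLp.toLp 2 (fun i => if h : i ∈ I then s ⟨i, h⟩ else 0)
  map_add' s t := by ext i; by_cases h : i ∈ I <;> simp [h]
  map_smul' c s := by ext i; by_cases h : i ∈ I <;> simp [h]

/-- `U_Iᵀ`: restriction of a vector to the block coordinates. -/
def blockRestr {n : ℕ} (I : Finset (Fin n)) :
    EuclideanSpace ℝ (Fin n) →ₗ[ℝ] EuclideanSpace ℝ ↥I where
  toFun x := WithLp.toLp 2 (fun i => x i)
  map_add' x y := by ext i; simp
  map_smul' c x := by ext i; simp

/-- Block Hessian `U_Iᵀ H U_I` as a continuous linear map. -/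
def blockHess {n : ℕ} (I : Finset (Fin n))
    (H : EuclideanSpace ℝ (Fin n) →L[ℝ] EuclideanSpace ℝ (Fin n)) :
    EuclideanSpace ℝ ↥I →L[ℝ] EuclideanSpace ℝ ↥I :=
  LinearMap.toContinuousLinearMap
    ((blockRestr I) ∘ₗ ((H : EuclideanSpace ℝ (Fin n) →ₗ[ℝ] EuclideanSpace ℝ (Fin n)) ∘ₗ blockIncl I))

/-- Quadratic model `q(s) = f₀ + gᵀs + (1/2) sᵀ H s`. -/
def quadModel {E : Type*} [NormedAddCommGroup E] [InnerProductSpace ℝ E]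
    (f₀ : ℝ) (g : E) (H : E →L[ℝ] E) (s : E) : ℝ :=
  f₀ + ⟪g, s⟫ + (1 / 2) * ⟪s, H s⟫

/-- Cubic model `m(s) = q(s) + (σ/6) ‖s‖³`. -/
def cubicModel {E : Type*} [NormedAddCommGroup E] [InnerProductSpace ℝ E]
    (f₀ : ℝ) (g : E) (H : E →L[ℝ] E) (σ : ℝ) (s : E) : ℝ :=
  quadModel f₀ g H s + σ / 6 * ‖s‖ ^ 3

/-- Gradient of the cubic model: `∇m(s) = g + H s + (σ/2) ‖s‖ s`. -/
def cubicModelGrad {E : Type*} [NormedAddCommGroup E] [InnerProductSpace ℝ E]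
    (g : E) (H : E →L[ℝ] E) (σ : ℝ) (s : E) : E :=
  g + H s + (σ / 2 * ‖s‖) • s

/-- The stepsize `α̂ = min{β/‖H‖, √(3β/(σ‖g‖))}`, the first argument being `+∞` if `H = 0`. -/
def alphaHat {E : Type*} [NormedAddCommGroup E] [InnerProductSpace ℝ E]
    (β σ : ℝ) (g : E) (H : E →L[ℝ] E) : ℝ :=
  haveI := Classical.dec (H = 0)
  if H = 0 then Real.sqrt (3 * β / (σ * ‖g‖))
  else min (β / ‖H‖) (Real.sqrt (3 * β / (σ * ‖g‖)))

/-- The Cauchy-like point `ŝ = -α̂ g`. -/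
def sHat {E : Type*} [NormedAddCommGroup E] [InnerProductSpace ℝ E]
    (β σ : ℝ) (g : E) (H : E →L[ℝ] E) : E :=
  -(alphaHat β σ g H) • g

theorem stmt3 (n : ℕ) (g : EuclideanSpace ℝ (Fin n)) (ihat : Fin n)
    (hmax : ∀ i, |g i| ≤ |g ihat|) (I : Finset (Fin n)) (hI : ihat ∈ I) :
    ((n : ℝ) + 1 - I.card) ^ (-(1 / 2 : ℝ)) * ‖g‖ ≤ ‖blockRestr I g‖ := by
  have hcard : (I.card : ℝ) ≤ n := by
    exact_mod_cast (by simpa using I.card_le_univ : I.card ≤ n)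
  set c : ℝ := (n : ℝ) + 1 - I.card with hc
  have hc1 : (1 : ℝ) ≤ c := by simp only [hc]; linarith
  have hc0 : (0 : ℝ) < c := lt_of_lt_of_le one_pos hc1
  -- norm of restriction squared
  have hSI : ‖blockRestr I g‖ ^ 2 = ∑ i ∈ I, ‖g i‖ ^ 2 := by
    rw [EuclideanSpace.norm_eq, Real.sq_sqrt (by positivity)]
    rw [← Finset.sum_attach I (fun i => ‖g i‖ ^ 2)]
    rfl
  have hSIpos : (0 : ℝ) ≤ ∑ i ∈ I, ‖g i‖ ^ 2 := by positivity
  -- each compl entry bounded by the restricted norm squared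
  have hb : ∀ i ∈ Iᶜ, ‖g i‖ ^ 2 ≤ ‖blockRestr I g‖ ^ 2 := by
    intro i _
    rw [hSI]
    calc ‖g i‖ ^ 2 ≤ ‖g ihat‖ ^ 2 := by
          have := hmax i
          simp only [Real.norm_eq_abs]
          exact pow_le_pow_left₀ (abs_nonneg _) this 2
      _ ≤ ∑ j ∈ I, ‖g j‖ ^ 2 :=
          Finset.single_le_sum (f := fun j => ‖g j‖ ^ 2) (fun j _ => by positivity) hI
  have hsum : ‖g‖ ^ 2 ≤ c * ‖blockRestr I g‖ ^ 2 := by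
    have hfull : ‖g‖ ^ 2 = ∑ i ∈ I, ‖g i‖ ^ 2 + ∑ i ∈ Iᶜ, ‖g i‖ ^ 2 := by
      rw [EuclideanSpace.norm_eq, Real.sq_sqrt (by positivity),
        Finset.sum_add_sum_compl]
    have hcompl : ∑ i ∈ Iᶜ, ‖g i‖ ^ 2 ≤ (Iᶜ.card : ℝ) * ‖blockRestr I g‖ ^ 2 := by
      calc ∑ i ∈ Iᶜ, ‖g i‖ ^ 2 ≤ ∑ _i ∈ Iᶜ, ‖blockRestr I g‖ ^ 2 :=
            Finset.sum_le_sum hb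
        _ = (Iᶜ.card : ℝ) * ‖blockRestr I g‖ ^ 2 := by
            rw [Finset.sum_const, nsmul_eq_mul]
    have hcc : (Iᶜ.card : ℝ) = (n : ℝ) - I.card := by
      rw [Finset.card_compl]
      have : I.card ≤ Fintype.card (Fin n) := I.card_le_univ
      push_cast [Nat.cast_sub this]
      simp
    rw [hfull]
    rw [hcc] at hcompl
    have : ∑ i ∈ I, ‖g i‖ ^ 2 ≤ ‖blockRestr I g‖ ^ 2 := le_of_eq hSI.symm
    nlinarith [norm_nonneg (blockRestr I g)]
  -- conclude
  have hle : ‖g‖ ≤ Real.sqrt c * ‖blockRestr I g‖ := by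
    have h1 : ‖g‖ = Real.sqrt (‖g‖ ^ 2) := by
      rw [Real.sqrt_sq (norm_nonneg _)]
    rw [h1]
    calc Real.sqrt (‖g‖ ^ 2) ≤ Real.sqrt (c * ‖blockRestr I g‖ ^ 2) :=
          Real.sqrt_le_sqrt hsum
      _ = Real.sqrt c * ‖blockRestr I g‖ := by
          rw [Real.sqrt_mul hc0.le, Real.sqrt_sq (norm_nonneg _)]
  have hrw : c ^ (-(1 / 2 : ℝ)) = (Real.sqrt c)⁻¹ := by
    rw [Real.rpow_neg hc0.le, ← Real.sqrt_eq_rpow]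
  rw [hrw, inv_mul_le_iff₀ (Real.sqrt_pos.mpr hc0)]
  exact hle

end
end

section
/- With the cubic model m, the stepsize α̂ and the point ŝ = −α̂ g as defined, it holds that m(0) − m(ŝ) ≥ (1 − β) α̂ ‖g‖². -/
open scoped RealInnerProductSpace

noncomputable section

/-! Along the steepest-descent ray the step length `t` is capped twice: `t ‖H‖ ≤ β` keeps the
curvature term below `β t ‖g‖² / 2`, and `σ ‖g‖ t² ≤ 3β` keeps the cubic term below the same
amount, so at least the fraction `1 - β` of the linear decrease `t ‖g‖²` survives. The two
arguments of the minimum defining `α̂` are exactly these two caps. -/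

theorem Real.mul_sq_le_of_le_sqrt_div {a b c : ℝ} (ha : 0 ≤ a) (hb : 0 ≤ b) (h : a ≤ √(b / c)) :
    c * a ^ 2 ≤ b := by
  rcases le_or_gt c 0 with hc | hc
  · nlinarith [sq_nonneg a]
  · have := (Real.le_sqrt ha (div_nonneg hb hc.le)).1 h
    rwa [le_div_iff₀ hc, mul_comm] at this

section CubicModel

variable {E : Type*} [NormedAddCommGroup E] [InnerProductSpace ℝ E]

theorem ContinuousLinearMap.inner_apply_self_le (H : E →L[ℝ] E) (x : E) :
    ⟪x, H x⟫ ≤ ‖H‖ * ‖x‖ ^ 2 :=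
  calc ⟪x, H x⟫ ≤ ‖x‖ * ‖H x‖ := real_inner_le_norm x (H x)
    _ ≤ ‖x‖ * (‖H‖ * ‖x‖) := by gcongr; exact H.le_opNorm x
    _ = ‖H‖ * ‖x‖ ^ 2 := by ring

theorem cubicModel_zero (f₀ : ℝ) (g : E) (H : E →L[ℝ] E) (σ : ℝ) :
    cubicModel f₀ g H σ 0 = f₀ := by
  simp [cubicModel, quadModel]

theorem cubicModel_zero_sub_cubicModel_neg_smul (f₀ : ℝ) (g : E) (H : E →L[ℝ] E) (σ : ℝ)
    {t : ℝ} (ht : 0 ≤ t) :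
    cubicModel f₀ g H σ 0 - cubicModel f₀ g H σ (-t • g) =
      t * ‖g‖ ^ 2 - t ^ 2 / 2 * ⟪g, H g⟫ - σ / 6 * (t * ‖g‖) ^ 3 := by
  have hnorm : ‖-t • g‖ = t * ‖g‖ := by
    rw [norm_smul, norm_neg, Real.norm_of_nonneg ht]
  have hlin : ⟪g, -t • g⟫ = -t * ‖g‖ ^ 2 := by
    rw [real_inner_smul_right, real_inner_self_eq_norm_sq]
  have hquad : ⟪-t • g, H (-t • g)⟫ = t ^ 2 * ⟪g, H g⟫ := by
    rw [map_smul, real_inner_smul_left, real_inner_smul_right]; ring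
  rw [cubicModel_zero, cubicModel, quadModel, hnorm, hlin, hquad]
  ring

theorem one_sub_mul_le_cubicModel_zero_sub_cubicModel_neg_smul (f₀ : ℝ) (g : E)
    (H : E →L[ℝ] E) {σ β t : ℝ} (ht : 0 ≤ t) (htH : t * ‖H‖ ≤ β)
    (htσ : σ * ‖g‖ * t ^ 2 ≤ 3 * β) :
    (1 - β) * t * ‖g‖ ^ 2 ≤ cubicModel f₀ g H σ 0 - cubicModel f₀ g H σ (-t • g) := by
  have hcurv : t ^ 2 * ⟪g, H g⟫ ≤ β * t * ‖g‖ ^ 2 :=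
    calc t ^ 2 * ⟪g, H g⟫ ≤ t ^ 2 * (‖H‖ * ‖g‖ ^ 2) := by gcongr; exact H.inner_apply_self_le g
      _ = t * (t * ‖H‖) * ‖g‖ ^ 2 := by ring
      _ ≤ t * β * ‖g‖ ^ 2 := by gcongr
      _ = β * t * ‖g‖ ^ 2 := by ring
  have hcubic : σ * (t * ‖g‖) ^ 3 ≤ 3 * β * t * ‖g‖ ^ 2 :=
    calc σ * (t * ‖g‖) ^ 3 = (σ * ‖g‖ * t ^ 2) * (t * ‖g‖ ^ 2) := by ring
      _ ≤ 3 * β * (t * ‖g‖ ^ 2) := by gcongr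
      _ = 3 * β * t * ‖g‖ ^ 2 := by ring
  rw [cubicModel_zero_sub_cubicModel_neg_smul f₀ g H σ ht]
  linarith

variable {β σ : ℝ} {g : E} {H : E →L[ℝ] E}

theorem alphaHat_le_sqrt : alphaHat β σ g H ≤ √(3 * β / (σ * ‖g‖)) := by
  unfold alphaHat
  split_ifs
  exacts [le_rfl, min_le_right _ _]

theorem alphaHat_nonneg (hβ : 0 ≤ β) : 0 ≤ alphaHat β σ g H := by
  unfold alphaHat
  split_ifs
  exacts [Real.sqrt_nonneg _, le_min (by positivity) (Real.sqrt_nonneg _)]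

theorem alphaHat_mul_opNorm_le (hβ : 0 ≤ β) : alphaHat β σ g H * ‖H‖ ≤ β := by
  by_cases hH : H = 0
  · simpa [hH] using hβ
  · have hα : alphaHat β σ g H ≤ β / ‖H‖ := by
      rw [alphaHat, if_neg hH]; exact min_le_left _ _
    exact (le_div_iff₀ (norm_pos_iff.mpr hH)).1 hα

theorem mul_alphaHat_sq_le (hβ : 0 ≤ β) : σ * ‖g‖ * alphaHat β σ g H ^ 2 ≤ 3 * β :=
  Real.mul_sq_le_of_le_sqrt_div (alphaHat_nonneg hβ) (by positivity) alphaHat_le_sqrt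

end CubicModel

theorem stmt5_general (q : ℕ) (g : EuclideanSpace ℝ (Fin q))
    (H : EuclideanSpace ℝ (Fin q) →L[ℝ] EuclideanSpace ℝ (Fin q))
    (f₀ σ β : ℝ) (hβ0 : 0 < β) :
    (1 - β) * alphaHat β σ g H * ‖g‖ ^ 2 ≤
      cubicModel f₀ g H σ 0 - cubicModel f₀ g H σ (sHat β σ g H) :=
  one_sub_mul_le_cubicModel_zero_sub_cubicModel_neg_smul f₀ g H (alphaHat_nonneg hβ0.le)
    (alphaHat_mul_opNorm_le hβ0.le) (mul_alphaHat_sq_le hβ0.le)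

theorem stmt5 (q : ℕ) (g : EuclideanSpace ℝ (Fin q)) (hg : g ≠ 0)
    (H : EuclideanSpace ℝ (Fin q) →L[ℝ] EuclideanSpace ℝ (Fin q))
    (hH : ∀ u v, ⟪H u, v⟫ = ⟪u, H v⟫)
    (f₀ σ β : ℝ) (hσ : 0 < σ) (hβ0 : 0 < β) (hβ1 : β < 1) :
    (1 - β) * alphaHat β σ g H * ‖g‖ ^ 2 ≤
      cubicModel f₀ g H σ 0 - cubicModel f₀ g H σ (sHat β σ g H) :=
  stmt5_general q g H f₀ σ β hβ0

end
end

section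
/- Let τ ≥ 0 and let L_I > 0 be a block Lipschitz constant for I. If s ∈ ℝ^{|I|} satisfies ‖∇m(s)‖ ≤ τ‖s‖², then ‖∇_I f(x + U_I s)‖ ≤ (τ + (σ + L_I)/2)‖s‖². -/
open scoped RealInnerProductSpace

noncomputable section

lemma blockHess_apply {n : ℕ} (I : Finset (Fin n))
    (M : EuclideanSpace ℝ (Fin n) →L[ℝ] EuclideanSpace ℝ (Fin n)) (u : EuclideanSpace ℝ ↥I) :
    blockHess I M u = blockRestr I (M (blockIncl I u)) := rfl

lemma restrCLM_apply {n : ℕ} (I : Finset (Fin n)) (y : EuclideanSpace ℝ (Fin n)) :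
    LinearMap.toContinuousLinearMap (blockRestr I) y = blockRestr I y := rfl

set_option maxHeartbeats 1000000 in
theorem stmt8 (n : ℕ) (hn : 0 < n)
    (f : EuclideanSpace ℝ (Fin n) → ℝ)
    (gradf : EuclideanSpace ℝ (Fin n) → EuclideanSpace ℝ (Fin n))
    (hessf : EuclideanSpace ℝ (Fin n) → (EuclideanSpace ℝ (Fin n) →L[ℝ] EuclideanSpace ℝ (Fin n)))
    (hf : ContDiff ℝ 2 f)
    (hgradf : ∀ x, HasGradientAt f (gradf x) x)
    (hhessf : ∀ x, HasFDerivAt gradf (hessf x) x)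
    (x : EuclideanSpace ℝ (Fin n)) (I : Finset (Fin n))
    (hg : blockRestr I (gradf x) ≠ 0)
    (σ τ : ℝ) (hσ : 0 < σ) (hτ : 0 ≤ τ)
    (LI : ℝ) (hLI : 0 < LI)
    (hlip : ∀ (y : EuclideanSpace ℝ (Fin n)) (u : EuclideanSpace ℝ ↥I),
      ‖blockHess I (hessf (y + blockIncl I u)) - blockHess I (hessf y)‖ ≤ LI * ‖u‖)
    (s : EuclideanSpace ℝ ↥I)
    (hsg : ‖cubicModelGrad (blockRestr I (gradf x)) (blockHess I (hessf x)) σ s‖ ≤ τ * ‖s‖ ^ 2) :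
    ‖blockRestr I (gradf (x + blockIncl I s))‖ ≤ (τ + (σ + LI) / 2) * ‖s‖ ^ 2 := by
  classical
  let g : EuclideanSpace ℝ ↥I := blockRestr I (gradf x)
  let H := blockHess I (hessf x)
  let R : EuclideanSpace ℝ (Fin n) →L[ℝ] EuclideanSpace ℝ ↥I :=
    LinearMap.toContinuousLinearMap (blockRestr I)
  let v : EuclideanSpace ℝ (Fin n) := blockIncl I s
  let B : ℝ → (EuclideanSpace ℝ ↥I →L[ℝ] EuclideanSpace ℝ ↥I) :=
    fun t => blockHess I (hessf (x + t • v))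
  let w : ℝ → EuclideanSpace ℝ ↥I := fun t => B t s - H s
  have hincl : ∀ t : ℝ, blockIncl I (t • s) = t • v := fun t => by
    simp only [map_smul, v]
  -- derivative of ψ t = R (gradf (x + t • v)) - t • H s
  have hψ : ∀ t : ℝ, HasDerivAt (fun t : ℝ => R (gradf (x + t • v)) - t • H s) (w t) t := by
    intro t
    have h1 : HasDerivAt (fun t : ℝ => x + t • v) v t := by
      simpa using ((hasDerivAt_id t).smul_const v).const_add x
    have h2 : HasDerivAt (fun t : ℝ => gradf (x + t • v)) (hessf (x + t • v) v) t :=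
      (hhessf (x + t • v)).comp_hasDerivAt t h1
    have h3 : HasDerivAt (fun t : ℝ => R (gradf (x + t • v))) (R (hessf (x + t • v) v)) t :=
      R.hasFDerivAt.comp_hasDerivAt t h2
    have h4 : HasDerivAt (fun t : ℝ => t • H s) (H s) t := by
      simpa using (hasDerivAt_id t).smul_const (H s)
    have hBts : B t s = R (hessf (x + t • v) v) := by
      rw [blockHess_apply, restrCLM_apply]
    have h5 := h3.sub h4
    show HasDerivAt _ (B t s - H s) t
    rw [hBts]
    exact h5
  -- Lipschitz-type bound for B
  have hBw : ∀ t : ℝ, ‖B t - H‖ ≤ LI * (|t| * ‖s‖) := by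
    intro t
    have h := hlip x (t • s)
    rw [hincl t] at h
    calc ‖B t - H‖ = ‖blockHess I (hessf (x + t • v)) - blockHess I (hessf x)‖ := rfl
      _ ≤ LI * ‖t • s‖ := h
      _ = LI * (|t| * ‖s‖) := by rw [norm_smul, Real.norm_eq_abs]
  -- continuity of w
  have hwcont : Continuous w := by
    rw [continuous_iff_continuousAt]
    intro a
    rw [Metric.continuousAt_iff]
    intro ε hε
    have hden : 0 < LI * ‖s‖ ^ 2 + 1 := by positivity
    refine ⟨ε / (LI * ‖s‖ ^ 2 + 1), by positivity, fun {b} hb => ?_⟩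
    have hxb : x + b • v = (x + a • v) + blockIncl I ((b - a) • s) := by
      rw [hincl]
      module
    have h1 : ‖B b - B a‖ ≤ LI * (|b - a| * ‖s‖) := by
      have h := hlip (x + a • v) ((b - a) • s)
      rw [← hxb] at h
      calc ‖B b - B a‖
          = ‖blockHess I (hessf (x + b • v)) - blockHess I (hessf (x + a • v))‖ := rfl
        _ ≤ LI * ‖(b - a) • s‖ := h
        _ = LI * (|b - a| * ‖s‖) := by rw [norm_smul, Real.norm_eq_abs]
    have hwsub : w b - w a = (B b - B a) s := by
      show (B b s - H s) - (B a s - H s) = (B b - B a) s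
      rw [ContinuousLinearMap.sub_apply]
      abel
    have h2 : dist (w b) (w a) ≤ (LI * ‖s‖ ^ 2) * |b - a| := by
      rw [dist_eq_norm, hwsub]
      calc ‖(B b - B a) s‖ ≤ ‖B b - B a‖ * ‖s‖ := (B b - B a).le_opNorm s
        _ ≤ (LI * (|b - a| * ‖s‖)) * ‖s‖ := mul_le_mul_of_nonneg_right h1 (norm_nonneg s)
        _ = (LI * ‖s‖ ^ 2) * |b - a| := by ring
    have hba : |b - a| < ε / (LI * ‖s‖ ^ 2 + 1) := by rwa [Real.dist_eq] at hb
    calc dist (w b) (w a) ≤ (LI * ‖s‖ ^ 2) * |b - a| := h2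
      _ ≤ (LI * ‖s‖ ^ 2 + 1) * |b - a| := by nlinarith [abs_nonneg (b - a)]
      _ < (LI * ‖s‖ ^ 2 + 1) * (ε / (LI * ‖s‖ ^ 2 + 1)) :=
          mul_lt_mul_of_pos_left hba hden
      _ = ε := by field_simp
  have hint : IntervalIntegrable w MeasureTheory.volume 0 1 :=
    hwcont.intervalIntegrable 0 1
  have hFTC : (∫ t in (0:ℝ)..1, w t) =
      (R (gradf (x + (1:ℝ) • v)) - (1:ℝ) • H s) - (R (gradf (x + (0:ℝ) • v)) - (0:ℝ) • H s) :=
    intervalIntegral.integral_eq_sub_of_hasDerivAt (fun t _ => hψ t) hint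
  have hFTC' : R (gradf (x + v)) = g + H s + ∫ t in (0:ℝ)..1, w t := by
    have h0 : R (gradf x) = g := restrCLM_apply I (gradf x)
    rw [hFTC]
    simp only [one_smul, zero_smul, sub_zero, add_zero, h0]
    abel
  -- bound on the integral
  have hbound : ‖∫ t in (0:ℝ)..1, w t‖ ≤ LI / 2 * ‖s‖ ^ 2 := by
    have hle : ∀ t ∈ Set.uIoc (0:ℝ) 1, ‖w t‖ ≤ (LI * ‖s‖ ^ 2) * t := by
      intro t ht
      rw [Set.uIoc_of_le zero_le_one] at ht
      have habs : |t| = t := abs_of_pos ht.1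
      have hw : w t = (B t - H) s := by
        show B t s - H s = (B t - H) s
        rw [ContinuousLinearMap.sub_apply]
      calc ‖w t‖ = ‖(B t - H) s‖ := by rw [hw]
        _ ≤ ‖B t - H‖ * ‖s‖ := (B t - H).le_opNorm s
        _ ≤ (LI * (|t| * ‖s‖)) * ‖s‖ := mul_le_mul_of_nonneg_right (hBw t) (norm_nonneg s)
        _ = (LI * ‖s‖ ^ 2) * t := by rw [habs]; ring
    have hgint : IntervalIntegrable (fun t : ℝ => (LI * ‖s‖ ^ 2) * t)
        MeasureTheory.volume 0 1 := (continuous_const.mul continuous_id).intervalIntegrable 0 1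
    have hnle := intervalIntegral.norm_integral_le_abs_of_norm_le
      (f := w) (g := fun t => (LI * ‖s‖ ^ 2) * t)
      (MeasureTheory.ae_restrict_of_forall_mem measurableSet_uIoc hle) hgint
    calc ‖∫ t in (0:ℝ)..1, w t‖ ≤ |∫ t in (0:ℝ)..1, (LI * ‖s‖ ^ 2) * t| := hnle
      _ = |(LI * ‖s‖ ^ 2) * ((1 ^ 2 - 0 ^ 2) / 2)| := by
          rw [intervalIntegral.integral_const_mul, integral_id]
      _ = LI / 2 * ‖s‖ ^ 2 := by
          rw [abs_of_nonneg (by positivity)]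
          ring
  -- final assembly
  have htgt : blockRestr I (gradf (x + blockIncl I s)) =
      cubicModelGrad g H σ s - (σ / 2 * ‖s‖) • s + ∫ t in (0:ℝ)..1, w t := by
    have h1 : blockRestr I (gradf (x + blockIncl I s)) = R (gradf (x + v)) :=
      (restrCLM_apply I (gradf (x + v))).symm
    rw [h1, hFTC', cubicModelGrad]
    abel
  rw [htgt]
  have hsmul : ‖(σ / 2 * ‖s‖) • s‖ = σ / 2 * ‖s‖ ^ 2 := by
    rw [norm_smul, Real.norm_eq_abs, abs_of_nonneg (by positivity)]
    ring
  have hcmg : ‖cubicModelGrad g H σ s‖ ≤ τ * ‖s‖ ^ 2 := hsg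
  calc ‖cubicModelGrad g H σ s - (σ / 2 * ‖s‖) • s + ∫ t in (0:ℝ)..1, w t‖
      ≤ ‖cubicModelGrad g H σ s - (σ / 2 * ‖s‖) • s‖ + ‖∫ t in (0:ℝ)..1, w t‖ := norm_add_le _ _
    _ ≤ (‖cubicModelGrad g H σ s‖ + ‖(σ / 2 * ‖s‖) • s‖) + ‖∫ t in (0:ℝ)..1, w t‖ := by
        gcongr
        exact norm_sub_le _ _
    _ ≤ (τ * ‖s‖ ^ 2 + σ / 2 * ‖s‖ ^ 2) + LI / 2 * ‖s‖ ^ 2 := by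
        rw [hsmul]
        gcongr
    _ = (τ + (σ + LI) / 2) * ‖s‖ ^ 2 := by ring

end
end

section
/- Let L > 0, σ_min > 0, γ₃ > 1 and η₂ ∈ (0,1), and let (σ_k)_{k≥0} be a sequence of reals with σ₀ ≥ σ_min such that for every k ≥ 0: σ_k ≥ σ_min, σ_{k+1} ≤ γ₃ σ_k, and σ_{k+1} ≤ σ_k whenever σ_k ≥ L/(1 − η₂). Then for every k ≥ 0, σ_min ≤ σ_k ≤ σ_max, where σ_max = max{σ₀, γ₃ L/(1 − η₂)}. -/
open scoped RealInnerProductSpace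

noncomputable section

theorem stmt10 (L σmin γ₃ η₂ : ℝ) (hL : 0 < L) (hσmin : 0 < σmin) (hγ₃ : 1 < γ₃)
    (hη₂0 : 0 < η₂) (hη₂1 : η₂ < 1)
    (σ : ℕ → ℝ) (hσ0 : σmin ≤ σ 0)
    (h1 : ∀ k, σmin ≤ σ k)
    (h2 : ∀ k, σ (k + 1) ≤ γ₃ * σ k)
    (h3 : ∀ k, L / (1 - η₂) ≤ σ k → σ (k + 1) ≤ σ k) :
    ∀ k, σmin ≤ σ k ∧ σ k ≤ max (σ 0) (γ₃ * L / (1 - η₂)) := by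
  intro k
  refine ⟨h1 k, ?_⟩
  induction k with
  | zero => exact le_max_left _ _
  | succ k ih =>
    rcases lt_or_ge (σ k) (L / (1 - η₂)) with h | h
    · refine le_trans (h2 k) (le_max_of_le_right ?_)
      have : γ₃ * σ k ≤ γ₃ * (L / (1 - η₂)) :=
        mul_le_mul_of_nonneg_left h.le (by linarith)
      calc γ₃ * σ k ≤ γ₃ * (L / (1 - η₂)) := this
        _ = γ₃ * L / (1 - η₂) := by ring
    · exact le_trans (h3 k h) ih

end
end

section
/- Let 0 < γ₁ ≤ 1 < γ₂, σ₀ > 0, σ_max ≥ σ₀, let S ⊆ ℕ, and let (σ_k)_{k≥0} be a sequence of positive reals with σ₀ as its first term such that σ_k ≤ σ_max for all k ≥ 0, σ_{k+1} ≥ γ₁ σ_k for every k ∈ S, and σ_{k+1} ≥ γ₂ σ_k for every k ∉ S. Then for every k ≥ 0, setting S_k = S ∩ {0,1,…,k}, one has k + 1 ≤ |S_k| (1 + |log γ₁|/log γ₂) + (1/log γ₂) log(σ_max/σ₀). -/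
open scoped RealInnerProductSpace

noncomputable section

theorem stmt11 (γ₁ γ₂ σ₀ σmax : ℝ) (hγ₁0 : 0 < γ₁) (hγ₁1 : γ₁ ≤ 1) (hγ₂ : 1 < γ₂)
    (hσ₀ : 0 < σ₀) (hσmax : σ₀ ≤ σmax)
    (S : Set ℕ) (σ : ℕ → ℝ) (hσ0 : σ 0 = σ₀)
    (hpos : ∀ k, 0 < σ k) (hub : ∀ k, σ k ≤ σmax)
    (hS : ∀ k ∈ S, γ₁ * σ k ≤ σ (k + 1))
    (hU : ∀ k ∉ S, γ₂ * σ k ≤ σ (k + 1)) :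
    ∀ k : ℕ, (k : ℝ) + 1 ≤
      ((S ∩ Set.Iic k).ncard : ℝ) * (1 + |Real.log γ₁| / Real.log γ₂) +
        1 / Real.log γ₂ * Real.log (σmax / σ₀) := by
  classical
  have hγ₂0 : (0:ℝ) < γ₂ := lt_trans one_pos hγ₂
  have hL2 : 0 < Real.log γ₂ := Real.log_pos hγ₂
  set c : ℕ → ℕ := fun k => ((Finset.Iic k).filter (· ∈ S)).card with hc
  have hcard : ∀ k : ℕ, (S ∩ Set.Iic k).ncard = c k := by
    intro k
    have : S ∩ Set.Iic k = ↑((Finset.Iic k).filter (· ∈ S)) := by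
      ext x
      simp [Set.mem_Iic, and_comm]
    rw [this, Set.ncard_coe_finset]
  have hck : ∀ k : ℕ, c k ≤ k + 1 := by
    intro k
    calc c k ≤ (Finset.Iic k).card := Finset.card_filter_le _ _
    _ = k + 1 := Nat.card_Iic k
  have hcs : ∀ k : ℕ, c (k+1) = c k + if (k+1) ∈ S then 1 else 0 := by
    intro k
    have h1 : Finset.Iic (k+1) = insert (k+1) (Finset.Iic k) := by
      ext x
      simp only [Finset.mem_insert, Finset.mem_Iic]
      omega
    simp only [hc, h1, Finset.filter_insert]
    by_cases h : (k+1) ∈ S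
    · have hnot : (k+1) ∉ (Finset.Iic k).filter (· ∈ S) := by
        simp only [Finset.mem_filter, Finset.mem_Iic]
        omega
      simp [h, Finset.card_insert_of_notMem hnot]
    · simp [h]
  -- key geometric lower bound
  have key : ∀ k : ℕ, σ₀ * γ₁ ^ (c k) * γ₂ ^ (k + 1 - c k) ≤ σ (k+1) := by
    intro k
    induction k with
    | zero =>
      by_cases h : (0:ℕ) ∈ S
      · have hIic0 : Finset.Iic (0:ℕ) = {0} := by ext x; simp [Nat.le_zero]
        have hc0 : c 0 = 1 := by simp [hc, hIic0, Finset.filter_singleton, h]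
        have := hS 0 h
        rw [hσ0] at this
        simpa [hc0] using by linarith
      · have hIic0 : Finset.Iic (0:ℕ) = {0} := by ext x; simp [Nat.le_zero]
        have hc0 : c 0 = 0 := by simp [hc, hIic0, Finset.filter_singleton, h]
        have := hU 0 h
        rw [hσ0] at this
        simpa [hc0] using by linarith
    | succ k ih =>
      by_cases h : (k+1) ∈ S
      · have hc1 : c (k+1) = c k + 1 := by rw [hcs k]; simp [h]
        have hsub : k + 1 + 1 - c (k+1) = k + 1 - c k := by omega
        have h2 := hS (k+1) h
        have h3 : γ₁ * (σ₀ * γ₁ ^ (c k) * γ₂ ^ (k + 1 - c k)) ≤ γ₁ * σ (k+1) :=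
          mul_le_mul_of_nonneg_left ih (le_of_lt hγ₁0)
        calc σ₀ * γ₁ ^ (c (k+1)) * γ₂ ^ (k + 1 + 1 - c (k+1))
            = γ₁ * (σ₀ * γ₁ ^ (c k) * γ₂ ^ (k + 1 - c k)) := by
              rw [hc1]
              have h4 : k + 1 + 1 - (c k + 1) = k + 1 - c k := by omega
              rw [h4]; ring
        _ ≤ γ₁ * σ (k+1) := h3
        _ ≤ σ (k+2) := h2
      · have hc1 : c (k+1) = c k := by rw [hcs k]; simp [h]
        have hsub : k + 1 + 1 - c (k+1) = (k + 1 - c k) + 1 := by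
          have := hck k; omega
        have h2 := hU (k+1) h
        have h3 : γ₂ * (σ₀ * γ₁ ^ (c k) * γ₂ ^ (k + 1 - c k)) ≤ γ₂ * σ (k+1) :=
          mul_le_mul_of_nonneg_left ih (le_of_lt hγ₂0)
        calc σ₀ * γ₁ ^ (c (k+1)) * γ₂ ^ (k + 1 + 1 - c (k+1))
            = γ₂ * (σ₀ * γ₁ ^ (c k) * γ₂ ^ (k + 1 - c k)) := by
              rw [hc1]
              have h4 : k + 1 + 1 - c k = (k + 1 - c k) + 1 := by
                have := hck k; omega
              rw [h4]; ring
        _ ≤ γ₂ * σ (k+1) := h3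
        _ ≤ σ (k+2) := h2
  intro k
  rw [hcard k]
  set a : ℝ := (c k : ℝ) with ha
  have ha0 : 0 ≤ a := Nat.cast_nonneg _
  have hak : a ≤ (k:ℝ) + 1 := by
    rw [ha]; exact_mod_cast hck k
  -- take logs
  have hLpos : 0 < σ₀ * γ₁ ^ (c k) * γ₂ ^ (k + 1 - c k) := by positivity
  have hle : σ₀ * γ₁ ^ (c k) * γ₂ ^ (k + 1 - c k) ≤ σmax :=
    le_trans (key k) (hub (k+1))
  have hlog : Real.log (σ₀ * γ₁ ^ (c k) * γ₂ ^ (k + 1 - c k)) ≤ Real.log σmax :=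
    Real.log_le_log (by positivity) hle
  have hexp : ((k + 1 - c k : ℕ) : ℝ) = (k:ℝ) + 1 - a := by
    rw [Nat.cast_sub (hck k)]; push_cast; ring
  have hlogL : Real.log (σ₀ * γ₁ ^ (c k) * γ₂ ^ (k + 1 - c k))
      = Real.log σ₀ + a * Real.log γ₁ + ((k:ℝ) + 1 - a) * Real.log γ₂ := by
    rw [Real.log_mul (by positivity) (by positivity),
        Real.log_mul (by positivity) (by positivity),
        Real.log_pow, Real.log_pow, hexp]
  rw [hlogL] at hlog
  have hA : |Real.log γ₁| = -Real.log γ₁ :=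
    abs_of_nonpos (Real.log_nonpos (le_of_lt hγ₁0) hγ₁1)
  have hD : Real.log (σmax / σ₀) = Real.log σmax - Real.log σ₀ :=
    Real.log_div (by linarith) (ne_of_gt hσ₀)
  have hmain : ((k:ℝ) + 1 - a) ≤
      (Real.log (σmax / σ₀) + a * |Real.log γ₁|) / Real.log γ₂ := by
    rw [le_div_iff₀ hL2, hA, hD]
    nlinarith [hlog, ha0, mul_nonneg ha0 (neg_nonneg.mpr (Real.log_nonpos (le_of_lt hγ₁0) hγ₁1))]
  have heq : a * (1 + |Real.log γ₁| / Real.log γ₂) +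
      1 / Real.log γ₂ * Real.log (σmax / σ₀)
      = a + (Real.log (σmax / σ₀) + a * |Real.log γ₁|) / Real.log γ₂ := by
    field_simp
    ring
  rw [heq]
  linarith

end
end

section
/- Let τ ≥ 0, η₁ ∈ (0,1), β ∈ (0,1), 0 < σ_min ≤ σ ≤ σ_max, and let L_I ∈ (0, L] be a block Lipschitz constant for I. Suppose the step s ∈ ℝ^{|I|} satisfies m(s) ≤ m(ŝ) and ‖∇m(s)‖ ≤ τ‖s‖², and the acceptance test f(x) − f(x + U_I s) ≥ η₁ (q(0) − q(s)) holds. Then f(x) − f(x + U_I s) ≥ η₁ (σ_min/6) (τ + (σ_max + L)/2)^{−3/2} ‖∇_I f(x + U_I s)‖^{3/2}. -/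
open scoped RealInnerProductSpace

noncomputable section

lemma cauchy_decrease {E : Type*} [NormedAddCommGroup E] [InnerProductSpace ℝ E]
    (f₀ : ℝ) (g : E) (H : E →L[ℝ] E) (σ β : ℝ)
    (hg : g ≠ 0) (hσ : 0 < σ) (hβ0 : 0 < β) (hβ1 : β ≤ 1) :
    cubicModel f₀ g H σ (-(alphaHat β σ g H) • g) ≤ f₀ := by
  set α := alphaHat β σ g H with hα
  have hgn : 0 < ‖g‖ := norm_pos_iff.mpr hg
  have hr : 0 < 3 * β / (σ * ‖g‖) := by positivity
  have hsq : 0 < Real.sqrt (3 * β / (σ * ‖g‖)) := Real.sqrt_pos.mpr hr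
  have hα0 : 0 < α := by
    rw [hα, alphaHat]
    split_ifs with h
    · exact hsq
    · have hH : 0 < ‖H‖ := norm_pos_iff.mpr h
      exact lt_min (by positivity) hsq
  have hαH : α * ‖H‖ ≤ β := by
    rw [hα, alphaHat]
    split_ifs with h
    · simp [h, hβ0.le]
    · have hH : 0 < ‖H‖ := norm_pos_iff.mpr h
      calc min (β / ‖H‖) (Real.sqrt (3 * β / (σ * ‖g‖))) * ‖H‖
          ≤ (β / ‖H‖) * ‖H‖ := by gcongr; exact min_le_left _ _
        _ = β := by field_simp
  have hα2 : σ * α ^ 2 * ‖g‖ ≤ 3 * β := by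
    have h1 : α ≤ Real.sqrt (3 * β / (σ * ‖g‖)) := by
      rw [hα, alphaHat]; split_ifs with h
      · exact le_refl _
      · exact min_le_right _ _
    have h2 : α ^ 2 ≤ 3 * β / (σ * ‖g‖) := by
      calc α ^ 2 ≤ Real.sqrt (3 * β / (σ * ‖g‖)) ^ 2 := pow_le_pow_left₀ hα0.le h1 2
        _ = 3 * β / (σ * ‖g‖) := Real.sq_sqrt hr.le
    calc σ * α ^ 2 * ‖g‖ ≤ σ * (3 * β / (σ * ‖g‖)) * ‖g‖ := by gcongr
      _ = 3 * β := by field_simp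
  have hgHg : ⟪g, H g⟫ ≤ ‖H‖ * ‖g‖ ^ 2 := by
    calc ⟪g, H g⟫ ≤ ‖g‖ * ‖H g‖ := real_inner_le_norm _ _
      _ ≤ ‖g‖ * (‖H‖ * ‖g‖) := by gcongr; exact H.le_opNorm g
      _ = ‖H‖ * ‖g‖ ^ 2 := by ring
  have hnorm : ‖-α • g‖ = α * ‖g‖ := by
    rw [norm_smul, Real.norm_eq_abs, abs_neg, abs_of_pos hα0]
  have hexp : cubicModel f₀ g H σ (-α • g) =
      f₀ - α * ‖g‖ ^ 2 + α ^ 2 / 2 * ⟪g, H g⟫ + σ / 6 * (α * ‖g‖) ^ 3 := by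
    rw [cubicModel, quadModel, hnorm, real_inner_smul_right, map_smul,
      real_inner_smul_left, real_inner_smul_right, real_inner_self_eq_norm_sq]
    ring
  rw [hexp]
  have hH0 : (0:ℝ) ≤ ‖H‖ := norm_nonneg _
  nlinarith [mul_pos hα0 (pow_pos hgn 2), sq_nonneg α, mul_nonneg (mul_nonneg hα0.le hα0.le) hgn.le]

lemma taylor_block {n : ℕ} (I : Finset (Fin n))
    (gradf : EuclideanSpace ℝ (Fin n) → EuclideanSpace ℝ (Fin n))
    (hessf : EuclideanSpace ℝ (Fin n) → (EuclideanSpace ℝ (Fin n) →L[ℝ] EuclideanSpace ℝ (Fin n)))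
    (hhessf : ∀ x, HasFDerivAt gradf (hessf x) x)
    (LI : ℝ) (hLI0 : 0 ≤ LI)
    (hlip : ∀ (y : EuclideanSpace ℝ (Fin n)) (u : EuclideanSpace ℝ ↥I),
      ‖blockHess I (hessf (y + blockIncl I u)) - blockHess I (hessf y)‖ ≤ LI * ‖u‖)
    (x : EuclideanSpace ℝ (Fin n)) (s : EuclideanSpace ℝ ↥I) :
    ‖blockRestr I (gradf (x + blockIncl I s)) - blockRestr I (gradf x)
      - blockHess I (hessf x) s‖ ≤ LI / 2 * ‖s‖ ^ 2 := by
  set v := blockIncl I s with hv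
  set R := LinearMap.toContinuousLinearMap (blockRestr (n := n) I) with hR
  set φ : ℝ → EuclideanSpace ℝ ↥I := fun t => R (gradf (x + t • v)) with hφ
  set ψ : ℝ → EuclideanSpace ℝ ↥I := fun t => blockHess I (hessf (x + t • v)) s with hψ
  have happ : ∀ y : EuclideanSpace ℝ (Fin n), R (hessf y v) = blockHess I (hessf y) s := by
    intro y; rfl
  have hderiv : ∀ t : ℝ, HasDerivAt φ (ψ t) t := by
    intro t
    have hc : HasDerivAt (fun t : ℝ => x + t • v) v t := by
      simpa using ((hasDerivAt_id t).smul_const v).const_add x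
    have h1 : HasDerivAt (fun t : ℝ => gradf (x + t • v)) (hessf (x + t • v) v) t :=
      (hhessf (x + t • v)).comp_hasDerivAt t hc
    have h2 := (R.hasFDerivAt (x := gradf (x + t • v))).comp_hasDerivAt t h1
    exact h2
  have hdiff : ∀ a b : ℝ, ‖ψ a - ψ b‖ ≤ LI * ‖s‖ ^ 2 * |a - b| := by
    intro a b
    have hx : x + a • v = (x + b • v) + blockIncl I ((a - b) • s) := by
      rw [map_smul, ← hv]; module
    calc ‖ψ a - ψ b‖
        = ‖(blockHess I (hessf (x + a • v)) - blockHess I (hessf (x + b • v))) s‖ := by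
          simp [hψ, ContinuousLinearMap.sub_apply]
      _ ≤ ‖blockHess I (hessf (x + a • v)) - blockHess I (hessf (x + b • v))‖ * ‖s‖ :=
          ContinuousLinearMap.le_opNorm _ _
      _ ≤ (LI * ‖(a - b) • s‖) * ‖s‖ := by
          gcongr
          rw [hx]
          exact hlip _ _
      _ = LI * ‖s‖ ^ 2 * |a - b| := by
          rw [norm_smul, Real.norm_eq_abs]; ring
  have hcont : Continuous ψ := by
    have : LipschitzWith (Real.toNNReal (LI * ‖s‖ ^ 2)) ψ := by
      apply LipschitzWith.of_dist_le_mul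
      intro a b
      rw [dist_eq_norm, dist_eq_norm]
      calc ‖ψ a - ψ b‖ ≤ LI * ‖s‖ ^ 2 * |a - b| := hdiff a b
        _ ≤ (Real.toNNReal (LI * ‖s‖ ^ 2)) * |a - b| := by
            gcongr
            exact Real.le_coe_toNNReal _
        _ = (Real.toNNReal (LI * ‖s‖ ^ 2)) * ‖a - b‖ := by rw [Real.norm_eq_abs]
    exact this.continuous
  have hint : IntervalIntegrable ψ MeasureTheory.volume 0 1 := hcont.intervalIntegrable 0 1
  have key : ∫ t in (0:ℝ)..1, ψ t = φ 1 - φ 0 :=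
    intervalIntegral.integral_eq_sub_of_hasDerivAt (fun t _ => hderiv t) hint
  set c : EuclideanSpace ℝ ↥I := blockHess I (hessf x) s with hc
  have key2 : ∫ t in (0:ℝ)..1, (ψ t - c) = φ 1 - φ 0 - c := by
    rw [intervalIntegral.integral_sub hint intervalIntegrable_const, key,
      intervalIntegral.integral_const]
    simp
  have hpt : ∀ t ∈ Set.Ioc (0:ℝ) 1, ‖ψ t - c‖ ≤ LI * ‖s‖ ^ 2 * t := by
    intro t ht
    have : ψ 0 = c := by simp [hψ, hc]
    calc ‖ψ t - c‖ = ‖ψ t - ψ 0‖ := by rw [this]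
      _ ≤ LI * ‖s‖ ^ 2 * |t - 0| := hdiff t 0
      _ = LI * ‖s‖ ^ 2 * t := by rw [sub_zero, abs_of_pos ht.1]
  have hbound : ‖∫ t in (0:ℝ)..1, (ψ t - c)‖ ≤ LI / 2 * ‖s‖ ^ 2 := by
    have hgint : IntervalIntegrable (fun t => LI * ‖s‖ ^ 2 * t) MeasureTheory.volume 0 1 :=
      (continuous_const.mul continuous_id).intervalIntegrable 0 1
    have h1 : ‖∫ t in (0:ℝ)..1, (ψ t - c)‖ ≤ |∫ t in (0:ℝ)..1, LI * ‖s‖ ^ 2 * t| := by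
      apply intervalIntegral.norm_integral_le_abs_of_norm_le _ hgint
      filter_upwards [MeasureTheory.ae_restrict_mem measurableSet_uIoc] with t ht
      have ht' : t ∈ Set.Ioc (0:ℝ) 1 := by rwa [Set.uIoc_of_le (by norm_num)] at ht
      exact hpt t ht'
    have h2 : ∫ t in (0:ℝ)..1, LI * ‖s‖ ^ 2 * t = LI / 2 * ‖s‖ ^ 2 := by
      rw [intervalIntegral.integral_const_mul, integral_id]
      ring
    rw [h2, abs_of_nonneg (by positivity)] at h1
    exact h1
  have hgoal : blockRestr I (gradf (x + blockIncl I s)) - blockRestr I (gradf x)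
      - blockHess I (hessf x) s = φ 1 - φ 0 - c := by
    simp only [hφ, hc, one_smul, zero_smul, add_zero, hv]
    rfl
  rw [hgoal, ← key2]
  exact hbound

theorem stmt13 (n : ℕ) (hn : 0 < n)
    (f : EuclideanSpace ℝ (Fin n) → ℝ)
    (gradf : EuclideanSpace ℝ (Fin n) → EuclideanSpace ℝ (Fin n))
    (hessf : EuclideanSpace ℝ (Fin n) → (EuclideanSpace ℝ (Fin n) →L[ℝ] EuclideanSpace ℝ (Fin n)))
    (hf : ContDiff ℝ 2 f)
    (hgradf : ∀ x, HasGradientAt f (gradf x) x)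
    (hhessf : ∀ x, HasFDerivAt gradf (hessf x) x)
    (L : ℝ) (hL : 0 < L)
    (hlipL : ∀ x y, ‖hessf x - hessf y‖ ≤ L * ‖x - y‖)
    (x : EuclideanSpace ℝ (Fin n)) (I : Finset (Fin n))
    (hg : blockRestr I (gradf x) ≠ 0)
    (τ η₁ β σmin σmax σ : ℝ)
    (hτ : 0 ≤ τ) (hη₁0 : 0 < η₁) (hη₁1 : η₁ < 1) (hβ0 : 0 < β) (hβ1 : β < 1)
    (hσmin : 0 < σmin) (hσ0 : σmin ≤ σ) (hσ1 : σ ≤ σmax)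
    (LI : ℝ) (hLI0 : 0 < LI) (hLIL : LI ≤ L)
    (hlip : ∀ (y : EuclideanSpace ℝ (Fin n)) (u : EuclideanSpace ℝ ↥I),
      ‖blockHess I (hessf (y + blockIncl I u)) - blockHess I (hessf y)‖ ≤ LI * ‖u‖)
    (s : EuclideanSpace ℝ ↥I)
    (hs : cubicModel (f x) (blockRestr I (gradf x)) (blockHess I (hessf x)) σ s ≤
      cubicModel (f x) (blockRestr I (gradf x)) (blockHess I (hessf x)) σ
        (sHat β σ (blockRestr I (gradf x)) (blockHess I (hessf x))))
    (hsg : ‖cubicModelGrad (blockRestr I (gradf x)) (blockHess I (hessf x)) σ s‖ ≤ τ * ‖s‖ ^ 2)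
    (hacc : η₁ * (quadModel (f x) (blockRestr I (gradf x)) (blockHess I (hessf x)) 0 -
        quadModel (f x) (blockRestr I (gradf x)) (blockHess I (hessf x)) s) ≤
      f x - f (x + blockIncl I s)) :
    η₁ * (σmin / 6) * (τ + (σmax + L) / 2) ^ (-(3 / 2 : ℝ)) *
        ‖blockRestr I (gradf (x + blockIncl I s))‖ ^ (3 / 2 : ℝ) ≤
      f x - f (x + blockIncl I s) := by
  set g := blockRestr I (gradf x) with hgdef
  set H := blockHess I (hessf x) with hHdef
  set gp := blockRestr I (gradf (x + blockIncl I s)) with hgpdef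
  have hσpos : 0 < σ := lt_of_lt_of_le hσmin hσ0
  have hσmax : 0 < σmax := lt_of_lt_of_le hσpos hσ1
  -- model value at s is at most f x
  have hms : cubicModel (f x) g H σ s ≤ f x := by
    refine hs.trans ?_
    have := cauchy_decrease (f x) g H σ β hg hσpos hβ0 hβ1.le
    simpa [sHat] using this
  -- quadratic decrease
  have hq0 : quadModel (f x) g H 0 = f x := by
    simp [quadModel]
  have hq : σ / 6 * ‖s‖ ^ 3 ≤ quadModel (f x) g H 0 - quadModel (f x) g H s := by
    have : quadModel (f x) g H s = cubicModel (f x) g H σ s - σ / 6 * ‖s‖ ^ 3 := by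
      rw [cubicModel]; ring
    rw [hq0, this]
    linarith
  -- Taylor bound
  have htaylor : ‖gp - g - H s‖ ≤ LI / 2 * ‖s‖ ^ 2 :=
    taylor_block I gradf hessf hhessf LI hLI0.le hlip x s
  -- gradient bound
  set C := τ + (σmax + L) / 2 with hCdef
  have hC : 0 < C := by positivity
  have hgp : ‖gp‖ ≤ C * ‖s‖ ^ 2 := by
    have hrepr : gp = (gp - g - H s) + cubicModelGrad g H σ s - (σ / 2 * ‖s‖) • s := by
      rw [cubicModelGrad]; abel
    have hw : ‖(σ / 2 * ‖s‖) • s‖ = σ / 2 * ‖s‖ ^ 2 := by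
      rw [norm_smul, Real.norm_eq_abs, abs_of_nonneg (by positivity)]; ring
    calc ‖gp‖ = ‖(gp - g - H s) + cubicModelGrad g H σ s - (σ / 2 * ‖s‖) • s‖ := by
          rw [← hrepr]
      _ ≤ ‖(gp - g - H s) + cubicModelGrad g H σ s‖ + ‖(σ / 2 * ‖s‖) • s‖ := norm_sub_le _ _
      _ ≤ ‖gp - g - H s‖ + ‖cubicModelGrad g H σ s‖ + ‖(σ / 2 * ‖s‖) • s‖ := by
          gcongr; exact norm_add_le _ _
      _ ≤ LI / 2 * ‖s‖ ^ 2 + τ * ‖s‖ ^ 2 + σ / 2 * ‖s‖ ^ 2 := by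
          rw [hw]; gcongr
      _ ≤ C * ‖s‖ ^ 2 := by
          rw [hCdef]
          nlinarith [sq_nonneg ‖s‖]
  -- rpow manipulation
  have hkey : C ^ (-(3 / 2 : ℝ)) * ‖gp‖ ^ (3 / 2 : ℝ) ≤ ‖s‖ ^ 3 := by
    have h1 : ‖gp‖ ^ (3 / 2 : ℝ) ≤ (C * ‖s‖ ^ 2) ^ (3 / 2 : ℝ) :=
      Real.rpow_le_rpow (norm_nonneg _) hgp (by norm_num)
    have h2 : (C * ‖s‖ ^ 2) ^ (3 / 2 : ℝ) = C ^ (3 / 2 : ℝ) * ‖s‖ ^ 3 := by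
      rw [Real.mul_rpow hC.le (by positivity)]
      congr 1
      rw [← Real.rpow_natCast ‖s‖ 2, ← Real.rpow_mul (norm_nonneg _),
        ← Real.rpow_natCast ‖s‖ 3]
      norm_num
    have h3 : C ^ (-(3 / 2 : ℝ)) * C ^ (3 / 2 : ℝ) = 1 := by
      rw [← Real.rpow_add hC]; norm_num
    calc C ^ (-(3 / 2 : ℝ)) * ‖gp‖ ^ (3 / 2 : ℝ)
        ≤ C ^ (-(3 / 2 : ℝ)) * (C ^ (3 / 2 : ℝ) * ‖s‖ ^ 3) := by
          rw [← h2]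
          exact mul_le_mul_of_nonneg_left h1 (Real.rpow_nonneg hC.le _)
      _ = (C ^ (-(3 / 2 : ℝ)) * C ^ (3 / 2 : ℝ)) * ‖s‖ ^ 3 := by ring
      _ = ‖s‖ ^ 3 := by rw [h3, one_mul]
  -- final chain
  have hchain : η₁ * (σmin / 6) * (C ^ (-(3 / 2 : ℝ)) * ‖gp‖ ^ (3 / 2 : ℝ)) ≤
      f x - f (x + blockIncl I s) := by
    have h4 : η₁ * (σmin / 6) * (C ^ (-(3 / 2 : ℝ)) * ‖gp‖ ^ (3 / 2 : ℝ)) ≤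
        η₁ * (σmin / 6) * ‖s‖ ^ 3 :=
      mul_le_mul_of_nonneg_left hkey (by positivity)
    have h5 : η₁ * (σmin / 6) * ‖s‖ ^ 3 ≤
        η₁ * (quadModel (f x) g H 0 - quadModel (f x) g H s) := by
      have h6 : σmin / 6 * ‖s‖ ^ 3 ≤ quadModel (f x) g H 0 - quadModel (f x) g H s := by
        have : σmin / 6 * ‖s‖ ^ 3 ≤ σ / 6 * ‖s‖ ^ 3 := by
          gcongr
        linarith
      calc η₁ * (σmin / 6) * ‖s‖ ^ 3 = η₁ * (σmin / 6 * ‖s‖ ^ 3) := by ring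
        _ ≤ η₁ * (quadModel (f x) g H 0 - quadModel (f x) g H s) :=
          mul_le_mul_of_nonneg_left h6 hη₁0.le
    exact h4.trans (h5.trans hacc)
  calc η₁ * (σmin / 6) * C ^ (-(3 / 2 : ℝ)) * ‖gp‖ ^ (3 / 2 : ℝ)
      = η₁ * (σmin / 6) * (C ^ (-(3 / 2 : ℝ)) * ‖gp‖ ^ (3 / 2 : ℝ)) := by ring
    _ ≤ f x - f (x + blockIncl I s) := hchain


end
end

section
/- Under the stated IBCN assumptions, given ε > 0, let K_ε^block = {k ≥ 0 : ‖∇_{I_k} f(x_{k+1})‖ ≥ ε} and let S = {k : ρ_k ≥ η₁} be the successful iterations. Then |K_ε^block ∩ S| ≤ ((f(x₀) − f_min)/c₂) ε^{−3/2}, where c₂ = η₁ (σ_min/6) (τ + (σ_max + L)/2)^{−3/2}. -/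
open scoped RealInnerProductSpace

noncomputable section

section Aux
open Set

lemma taylor_grad {E F : Type*} [NormedAddCommGroup E] [NormedSpace ℝ E]
    [NormedAddCommGroup F] [NormedSpace ℝ F]
    (g : E → F) (H : E → (E →L[ℝ] F)) (hg : ∀ y, HasFDerivAt g (H y) y)
    (L : ℝ) (hlip : ∀ y z, ‖H y - H z‖ ≤ L * ‖y - z‖) (x d : E) :
    ‖g (x + d) - g x - H x d‖ ≤ L / 2 * ‖d‖ ^ 2 := by
  set φ : ℝ → F := fun t => g (x + t • d) - g x - t • H x d with hφ
  have hline : ∀ t : ℝ, HasDerivAt (fun t : ℝ => x + t • d) d t := by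
    intro t
    simpa using ((hasDerivAt_id t).smul_const d).const_add x
  have hφ' : ∀ t : ℝ, HasDerivAt φ (H (x + t • d) d - H x d) t := by
    intro t
    have h1 : HasDerivAt (fun t : ℝ => g (x + t • d)) (H (x + t • d) d) t :=
      (hg (x + t • d)).comp_hasDerivAt t (hline t)
    have h2 : HasDerivAt (fun t : ℝ => t • H x d) (H x d) t := by
      simpa using (hasDerivAt_id t).smul_const (H x d)
    exact (h1.sub_const (g x)).sub h2
  have key : ∀ ⦃t⦄, t ∈ Icc (0:ℝ) 1 → ‖φ t‖ ≤ L * ‖d‖ ^ 2 * t ^ 2 / 2 := by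
    refine image_norm_le_of_norm_deriv_right_le_deriv_boundary
      (f' := fun t => H (x + t • d) d - H x d)
      (B := fun t => L * ‖d‖ ^ 2 * t ^ 2 / 2)
      (B' := fun t => L * ‖d‖ ^ 2 * t) ?_ ?_ ?_ ?_ ?_
    · exact fun t _ => ((hφ' t).continuousAt).continuousWithinAt
    · exact fun t _ => (hφ' t).hasDerivWithinAt
    · simp [hφ]
    · intro t
      have : HasDerivAt (fun t : ℝ => L * ‖d‖ ^ 2 * t ^ 2 / 2) (L * ‖d‖ ^ 2 * t) t := by
        have h := ((hasDerivAt_pow 2 t).const_mul (L * ‖d‖ ^ 2)).div_const 2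
        exact h.congr_deriv (by ring)
      exact this
    · intro t ht
      have h1 : ‖H (x + t • d) d - H x d‖ ≤ ‖H (x + t • d) - H x‖ * ‖d‖ := by
        simpa using (H (x + t • d) - H x).le_opNorm d
      have h2 : ‖H (x + t • d) - H x‖ ≤ L * (t * ‖d‖) := by
        have := hlip (x + t • d) x
        simpa [norm_smul, abs_of_nonneg ht.1] using this
      calc ‖H (x + t • d) d - H x d‖ ≤ L * (t * ‖d‖) * ‖d‖ :=
            h1.trans (by
              have hd : (0:ℝ) ≤ ‖d‖ := norm_nonneg d
              exact mul_le_mul_of_nonneg_right h2 hd)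
        _ = L * ‖d‖ ^ 2 * t := by ring
  have := key (right_mem_Icc.2 zero_le_one)
  simpa [hφ] using this.trans (by ring_nf; norm_num)

lemma taylor_val {E : Type*} [NormedAddCommGroup E] [InnerProductSpace ℝ E] [CompleteSpace E]
    (f : E → ℝ) (g : E → E) (H : E → (E →L[ℝ] E))
    (hg : ∀ y, HasGradientAt f (g y) y) (hH : ∀ y, HasFDerivAt g (H y) y)
    (L : ℝ) (hlip : ∀ y z, ‖H y - H z‖ ≤ L * ‖y - z‖) (x d : E) :
    |f (x + d) - f x - ⟪g x, d⟫ - 1 / 2 * ⟪d, H x d⟫| ≤ L / 6 * ‖d‖ ^ 3 := by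
  set ψ : ℝ → ℝ := fun t =>
    f (x + t • d) - f x - t * ⟪g x, d⟫ - t ^ 2 / 2 * ⟪d, H x d⟫ with hψ
  have hline : ∀ t : ℝ, HasDerivAt (fun t : ℝ => x + t • d) d t := by
    intro t; simpa using ((hasDerivAt_id t).smul_const d).const_add x
  have hψ' : ∀ t : ℝ, HasDerivAt ψ
      (⟪g (x + t • d) - g x - H x (t • d), d⟫) t := by
    intro t
    have h1 : HasDerivAt (fun t : ℝ => f (x + t • d)) (⟪g (x + t • d), d⟫) t := by
      have := ((hg (x + t • d)).hasFDerivAt).comp_hasDerivAt t (hline t)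
      exact this
    have h2 : HasDerivAt (fun t : ℝ => t * ⟪g x, d⟫) (⟪g x, d⟫) t := by
      simpa using (hasDerivAt_id t).mul_const (⟪g x, d⟫)
    have h3 : HasDerivAt (fun t : ℝ => t ^ 2 / 2 * ⟪d, H x d⟫) (t * ⟪d, H x d⟫) t := by
      have h := ((hasDerivAt_pow 2 t).div_const 2).mul_const (⟪d, H x d⟫)
      exact h.congr_deriv (by push_cast; ring)
    have heq : (⟪g (x + t • d) - g x - H x (t • d), d⟫ : ℝ)
        = ⟪g (x + t • d), d⟫ - ⟪g x, d⟫ - t * ⟪d, H x d⟫ := by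
      have hsm : H x (t • d) = t • H x d := (H x).map_smul t d
      rw [inner_sub_left, inner_sub_left, hsm, real_inner_smul_left,
        real_inner_comm d (H x d)]
    rw [heq]
    exact ((h1.sub_const (f x)).sub h2).sub h3
  have key : ∀ ⦃t⦄, t ∈ Set.Icc (0:ℝ) 1 → ‖ψ t‖ ≤ L * ‖d‖ ^ 3 * t ^ 3 / 6 := by
    refine image_norm_le_of_norm_deriv_right_le_deriv_boundary
      (f' := fun t => (⟪g (x + t • d) - g x - H x (t • d), d⟫ : ℝ))
      (B := fun t => L * ‖d‖ ^ 3 * t ^ 3 / 6)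
      (B' := fun t => L * ‖d‖ ^ 3 * t ^ 2 / 2) ?_ ?_ ?_ ?_ ?_
    · exact fun t _ => ((hψ' t).continuousAt).continuousWithinAt
    · exact fun t _ => (hψ' t).hasDerivWithinAt
    · simp [hψ]
    · intro t
      have h := ((hasDerivAt_pow 3 t).const_mul (L * ‖d‖ ^ 3)).div_const 6
      have he : L * ‖d‖ ^ 3 * (↑(3:ℕ) * t ^ (3 - 1)) / 6 = L * ‖d‖ ^ 3 * t ^ 2 / 2 := by
        push_cast; ring
      rw [he] at h; exact h
    · intro t ht
      have h1 : |(⟪g (x + t • d) - g x - H x (t • d), d⟫ : ℝ)| ≤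
          ‖g (x + t • d) - g x - H x (t • d)‖ * ‖d‖ := abs_real_inner_le_norm _ _
      have h2 : ‖g (x + t • d) - g x - H x (t • d)‖ ≤ L / 2 * ‖t • d‖ ^ 2 :=
        taylor_grad g H hH L hlip x (t • d)
      have h3 : ‖t • d‖ ^ 2 = t ^ 2 * ‖d‖ ^ 2 := by
        rw [norm_smul, Real.norm_eq_abs, mul_pow, sq_abs]
      rw [Real.norm_eq_abs]
      calc |(⟪g (x + t • d) - g x - H x (t • d), d⟫ : ℝ)|
          ≤ L / 2 * ‖t • d‖ ^ 2 * ‖d‖ :=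
            h1.trans (mul_le_mul_of_nonneg_right h2 (norm_nonneg d))
        _ = L * ‖d‖ ^ 3 * t ^ 2 / 2 := by rw [h3]; ring
  have := key (Set.right_mem_Icc.2 zero_le_one)
  rw [Real.norm_eq_abs] at this
  simpa [hψ] using this.trans (by ring_nf; norm_num)

end Aux

lemma blockRestr_blockIncl {n : ℕ} (I : Finset (Fin n)) (s : EuclideanSpace ℝ ↥I) :
    blockRestr I (blockIncl I s) = s := by
  ext i
  simp [blockRestr, blockIncl, i.2]

lemma inner_blockIncl {n : ℕ} (I : Finset (Fin n)) (v : EuclideanSpace ℝ (Fin n))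
    (s : EuclideanSpace ℝ ↥I) :
    ⟪v, blockIncl I s⟫ = ⟪blockRestr I v, s⟫ := by
  simp only [PiLp.inner_apply, RCLike.inner_apply, conj_trivial]
  conv_lhs => enter [2, i]; rw [mul_comm]
  conv_rhs => enter [2, i]; rw [mul_comm]
  have h0 : ∑ i : Fin n, v i * (blockIncl I) s i = ∑ i ∈ I, v i * (blockIncl I) s i := by
    refine (Finset.sum_subset I.subset_univ ?_).symm
    intro i _ hi
    simp [blockIncl, hi]
  rw [show (Finset.univ : Finset ↥I) = I.attach from rfl, h0,
    ← Finset.sum_attach I (fun i => v i * (blockIncl I) s i)]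
  apply Finset.sum_congr rfl
  intro i _
  simp [blockIncl, blockRestr, i.2]

lemma blockIncl_inner {n : ℕ} (I : Finset (Fin n)) (v : EuclideanSpace ℝ (Fin n))
    (s : EuclideanSpace ℝ ↥I) :
    ⟪blockIncl I s, v⟫ = ⟪s, blockRestr I v⟫ := by
  rw [real_inner_comm, inner_blockIncl, real_inner_comm]

lemma norm_blockIncl {n : ℕ} (I : Finset (Fin n)) (s : EuclideanSpace ℝ ↥I) :
    ‖blockIncl I s‖ = ‖s‖ := by
  have h : ⟪blockIncl I s, blockIncl I s⟫ = ⟪s, s⟫ := by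
    rw [inner_blockIncl, blockRestr_blockIncl]
  rw [norm_eq_sqrt_real_inner, norm_eq_sqrt_real_inner, h]

lemma norm_blockRestr_le {n : ℕ} (I : Finset (Fin n)) (v : EuclideanSpace ℝ (Fin n)) :
    ‖blockRestr I v‖ ≤ ‖v‖ := by
  rcases eq_or_ne (blockRestr I v) 0 with h | h
  · simp [h]
  · have h1 : ‖blockRestr I v‖ ^ 2 = ⟪v, blockIncl I (blockRestr I v)⟫ := by
      rw [inner_blockIncl, real_inner_self_eq_norm_sq]
    have h2 : (⟪v, blockIncl I (blockRestr I v)⟫ : ℝ) ≤ ‖v‖ * ‖blockRestr I v‖ := by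
      calc (⟪v, blockIncl I (blockRestr I v)⟫ : ℝ) ≤ ‖v‖ * ‖blockIncl I (blockRestr I v)‖ :=
        real_inner_le_norm _ _
      _ = ‖v‖ * ‖blockRestr I v‖ := by rw [norm_blockIncl]
    have hpos : 0 < ‖blockRestr I v‖ := norm_pos_iff.2 h
    nlinarith

lemma inner_blockHess {n : ℕ} (I : Finset (Fin n))
    (H : EuclideanSpace ℝ (Fin n) →L[ℝ] EuclideanSpace ℝ (Fin n))
    (sv : EuclideanSpace ℝ ↥I) :
    ⟪sv, blockHess I H sv⟫ = ⟪blockIncl I sv, H (blockIncl I sv)⟫ := by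
  have h : blockHess I H sv = blockRestr I (H (blockIncl I sv)) := rfl
  rw [h, ← blockIncl_inner]

lemma blockRestr_apply_hess {n : ℕ} (I : Finset (Fin n))
    (H : EuclideanSpace ℝ (Fin n) →L[ℝ] EuclideanSpace ℝ (Fin n))
    (sv : EuclideanSpace ℝ ↥I) :
    blockRestr I (H (blockIncl I sv)) = blockHess I H sv := rfl


lemma quadModel_zero {E : Type*} [NormedAddCommGroup E] [InnerProductSpace ℝ E]
    (f₀ : ℝ) (g : E) (H : E →L[ℝ] E) : quadModel f₀ g H 0 = f₀ := by
  simp [quadModel]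

lemma cauchy_lt {E : Type*} [NormedAddCommGroup E] [InnerProductSpace ℝ E]
    (f₀ : ℝ) (g : E) (H : E →L[ℝ] E) {σ β : ℝ}
    (hσ : 0 < σ) (hg : g ≠ 0) (hβ0 : 0 < β) (hβ1 : β < 1) :
    cubicModel f₀ g H σ (sHat β σ g H) < f₀ := by
  classical
  set α := alphaHat β σ g H with hα
  have hgn : 0 < ‖g‖ := norm_pos_iff.2 hg
  have hsq : 0 < 3 * β / (σ * ‖g‖) := by positivity
  have hsqrt : 0 < Real.sqrt (3 * β / (σ * ‖g‖)) := Real.sqrt_pos.2 hsq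
  have hα0 : 0 < α := by
    rw [hα, alphaHat]
    split_ifs with h
    · exact hsqrt
    · exact lt_min (div_pos hβ0 (norm_pos_iff.2 h)) hsqrt
  have hαH : α * ‖H‖ ≤ β := by
    rw [hα, alphaHat]
    split_ifs with h
    · simp [h, hβ0.le]
    · have h1 : min (β / ‖H‖) (Real.sqrt (3 * β / (σ * ‖g‖))) ≤ β / ‖H‖ := min_le_left _ _
      have hH : 0 < ‖H‖ := norm_pos_iff.2 h
      calc min (β / ‖H‖) (Real.sqrt (3 * β / (σ * ‖g‖))) * ‖H‖ ≤ β / ‖H‖ * ‖H‖ :=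
            mul_le_mul_of_nonneg_right h1 hH.le
        _ = β := div_mul_cancel₀ β hH.ne'
  have hα2 : α ^ 2 ≤ 3 * β / (σ * ‖g‖) := by
    have hle : α ≤ Real.sqrt (3 * β / (σ * ‖g‖)) := by
      rw [hα, alphaHat]; split_ifs with h
      · exact le_refl _
      · exact min_le_right _ _
    calc α ^ 2 ≤ Real.sqrt (3 * β / (σ * ‖g‖)) ^ 2 := by
          exact pow_le_pow_left₀ hα0.le hle 2
      _ = 3 * β / (σ * ‖g‖) := Real.sq_sqrt hsq.le
  have hsh : sHat β σ g H = -α • g := rfl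
  have hnorm : ‖sHat β σ g H‖ = α * ‖g‖ := by
    rw [hsh, norm_smul, norm_neg, Real.norm_eq_abs, abs_of_pos hα0]
  have hinner1 : (⟪g, (-α : ℝ) • g⟫ : ℝ) = -α * ‖g‖ ^ 2 := by
    rw [real_inner_smul_right, real_inner_self_eq_norm_sq]
  have hinner2 : (⟪(-α : ℝ) • g, H ((-α : ℝ) • g)⟫ : ℝ) = α ^ 2 * ⟪g, H g⟫ := by
    rw [map_smul, real_inner_smul_left, real_inner_smul_right]
    ring
  have hHg : (⟪g, H g⟫ : ℝ) ≤ ‖H‖ * ‖g‖ ^ 2 := by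
    calc (⟪g, H g⟫ : ℝ) ≤ ‖g‖ * ‖H g‖ := real_inner_le_norm _ _
      _ ≤ ‖g‖ * (‖H‖ * ‖g‖) := by
          exact mul_le_mul_of_nonneg_left (H.le_opNorm g) hgn.le
      _ = ‖H‖ * ‖g‖ ^ 2 := by ring
  have e1 : α ^ 2 / 2 * ⟪g, H g⟫ ≤ β / 2 * α * ‖g‖ ^ 2 := by
    have h1 : α ^ 2 / 2 * ⟪g, H g⟫ ≤ α ^ 2 / 2 * (‖H‖ * ‖g‖ ^ 2) := by
      apply mul_le_mul_of_nonneg_left hHg; positivity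
    have h2 : α ^ 2 / 2 * (‖H‖ * ‖g‖ ^ 2) = (α * ‖H‖) * (α / 2 * ‖g‖ ^ 2) := by ring
    have h3 : (α * ‖H‖) * (α / 2 * ‖g‖ ^ 2) ≤ β * (α / 2 * ‖g‖ ^ 2) := by
      apply mul_le_mul_of_nonneg_right hαH; positivity
    calc α ^ 2 / 2 * ⟪g, H g⟫ ≤ (α * ‖H‖) * (α / 2 * ‖g‖ ^ 2) := by rw [← h2]; exact h1
      _ ≤ β * (α / 2 * ‖g‖ ^ 2) := h3
      _ = β / 2 * α * ‖g‖ ^ 2 := by ring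
  have e2 : σ / 6 * (α * ‖g‖) ^ 3 ≤ β / 2 * α * ‖g‖ ^ 2 := by
    have h1 : σ / 6 * (α * ‖g‖) ^ 3 = σ * ‖g‖ * α ^ 2 * (α * ‖g‖ ^ 2 / 6) := by ring
    have h2 : σ * ‖g‖ * α ^ 2 ≤ 3 * β := by
      have := mul_le_mul_of_nonneg_left hα2 (by positivity : (0:ℝ) ≤ σ * ‖g‖)
      rwa [mul_div_cancel₀ _ (by positivity : (σ * ‖g‖) ≠ 0)] at this
    calc σ / 6 * (α * ‖g‖) ^ 3 = σ * ‖g‖ * α ^ 2 * (α * ‖g‖ ^ 2 / 6) := h1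
      _ ≤ 3 * β * (α * ‖g‖ ^ 2 / 6) := by
          apply mul_le_mul_of_nonneg_right h2; positivity
      _ = β / 2 * α * ‖g‖ ^ 2 := by ring
  have hval : cubicModel f₀ g H σ (sHat β σ g H) =
      f₀ - α * ‖g‖ ^ 2 + α ^ 2 / 2 * ⟪g, H g⟫ + σ / 6 * (α * ‖g‖) ^ 3 := by
    rw [cubicModel, quadModel, hnorm, hsh, hinner1, hinner2]
    ring
  rw [hval]
  have hfin : -(α * ‖g‖ ^ 2) + β / 2 * α * ‖g‖ ^ 2 + β / 2 * α * ‖g‖ ^ 2 < 0 := by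
    have : (β - 1) * (α * ‖g‖ ^ 2) < 0 :=
      mul_neg_of_neg_of_pos (by linarith) (by positivity)
    nlinarith
  linarith [e1, e2]

lemma model_decrease {E : Type*} [NormedAddCommGroup E] [InnerProductSpace ℝ E]
    (f₀ : ℝ) (g : E) (H : E →L[ℝ] E) {σ β : ℝ}
    (hσ : 0 < σ) (hg : g ≠ 0) (hβ0 : 0 < β) (hβ1 : β < 1) (s : E)
    (hm : cubicModel f₀ g H σ s ≤ cubicModel f₀ g H σ (sHat β σ g H)) :
    σ / 6 * ‖s‖ ^ 3 < quadModel f₀ g H 0 - quadModel f₀ g H s := by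
  have h1 := hm.trans_lt (cauchy_lt f₀ g H hσ hg hβ0 hβ1)
  rw [cubicModel] at h1
  rw [quadModel_zero]
  linarith


set_option maxHeartbeats 1000000

theorem stmt15 (n : ℕ) (hn : 0 < n)
    (f : EuclideanSpace ℝ (Fin n) → ℝ)
    (gradf : EuclideanSpace ℝ (Fin n) → EuclideanSpace ℝ (Fin n))
    (hessf : EuclideanSpace ℝ (Fin n) → (EuclideanSpace ℝ (Fin n) →L[ℝ] EuclideanSpace ℝ (Fin n)))
    (hf : ContDiff ℝ 2 f)
    (hgradf : ∀ x, HasGradientAt f (gradf x) x)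
    (hhessf : ∀ x, HasFDerivAt gradf (hessf x) x)
    (L : ℝ) (hL : 0 < L)
    (hlipL : ∀ x y, ‖hessf x - hessf y‖ ≤ L * ‖x - y‖)
    (σmin σ₀ η₁ η₂ γ₁ γ₂ γ₃ τ β θ : ℝ)
    (hσmin : 0 < σmin) (hσ₀ : σmin ≤ σ₀)
    (hη₁0 : 0 < η₁) (hη₁₂ : η₁ ≤ η₂) (hη₂1 : η₂ < 1)
    (hγ₁0 : 0 < γ₁) (hγ₁1 : γ₁ ≤ 1) (hγ₂ : 1 < γ₂) (hγ₂₃ : γ₂ ≤ γ₃)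
    (hτ : 0 ≤ τ) (hβ0 : 0 < β) (hβ1 : β < 1) (hθ0 : 0 < θ) (hθ1 : θ ≤ 1)
    (x : ℕ → EuclideanSpace ℝ (Fin n)) (I : ℕ → Finset (Fin n))
    (s : ∀ k : ℕ, EuclideanSpace ℝ ↥(I k)) (σ : ℕ → ℝ) (ρ : ℕ → ℝ)
    (hσzero : σ 0 = σ₀) (hσpos : ∀ k, 0 < σ k)
    (hgne : ∀ k, gradf (x k) ≠ 0)
    (hgreedy : ∀ k, θ * ‖gradf (x k)‖ ≤ ‖blockRestr (I k) (gradf (x k))‖)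
    (hstepg : ∀ k, ‖cubicModelGrad (blockRestr (I k) (gradf (x k)))
        (blockHess (I k) (hessf (x k))) (σ k) (s k)‖ ≤ τ * ‖s k‖ ^ 2)
    (hstepm : ∀ k, cubicModel (f (x k)) (blockRestr (I k) (gradf (x k)))
        (blockHess (I k) (hessf (x k))) (σ k) (s k) ≤
      cubicModel (f (x k)) (blockRestr (I k) (gradf (x k)))
        (blockHess (I k) (hessf (x k))) (σ k)
        (sHat β (σ k) (blockRestr (I k) (gradf (x k))) (blockHess (I k) (hessf (x k)))))
    (hρ : ∀ k, ρ k = (f (x k) - f (x k + blockIncl (I k) (s k))) /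
      (quadModel (f (x k)) (blockRestr (I k) (gradf (x k))) (blockHess (I k) (hessf (x k))) 0 -
       quadModel (f (x k)) (blockRestr (I k) (gradf (x k))) (blockHess (I k) (hessf (x k))) (s k)))
    (hx : ∀ k, x (k + 1) = if η₁ ≤ ρ k then x k + blockIncl (I k) (s k) else x k)
    (hσ1 : ∀ k, η₂ ≤ ρ k → max σmin (γ₁ * σ k) ≤ σ (k + 1) ∧ σ (k + 1) ≤ σ k)
    (hσ2 : ∀ k, η₁ ≤ ρ k → ρ k < η₂ → σ k ≤ σ (k + 1) ∧ σ (k + 1) ≤ γ₂ * σ k)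
    (hσ3 : ∀ k, ρ k < η₁ → γ₂ * σ k ≤ σ (k + 1) ∧ σ (k + 1) ≤ γ₃ * σ k)
    (fmin Hmax : ℝ) (hHmax : 0 < Hmax)
    (hfmin : ∀ y, f y ≤ f (x 0) → fmin ≤ f y)
    (hHb : ∀ y, f y ≤ f (x 0) → ‖hessf y‖ ≤ Hmax)
    (ε : ℝ) (hε : 0 < ε) :
    ({k : ℕ | ε ≤ ‖blockRestr (I k) (gradf (x (k + 1)))‖} ∩ {k : ℕ | η₁ ≤ ρ k}).Finite ∧
      (({k : ℕ | ε ≤ ‖blockRestr (I k) (gradf (x (k + 1)))‖} ∩ {k : ℕ | η₁ ≤ ρ k}).ncard : ℝ) ≤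
        (f (x 0) - fmin) /
            (η₁ * (σmin / 6) *
              (τ + (max σ₀ (γ₃ * L / (1 - η₂)) + L) / 2) ^ (-(3 / 2 : ℝ))) *
          ε ^ (-(3 / 2 : ℝ)) := by
  classical
  have hγ₃1 : 1 < γ₃ := lt_of_lt_of_le hγ₂ hγ₂₃
  have hη₂0 : 0 < η₂ := lt_of_lt_of_le hη₁0 hη₁₂
  have h1η₂ : 0 < 1 - η₂ := by linarith
  set Q : ℕ → ℝ := fun k => quadModel (f (x k)) (blockRestr (I k) (gradf (x k)))
    (blockHess (I k) (hessf (x k))) (s k) with hQ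
  set σmax : ℝ := max σ₀ (γ₃ * L / (1 - η₂)) with hsm
  have hσmaxpos : 0 < σmax := lt_of_lt_of_le (lt_of_lt_of_le hσmin hσ₀) (le_max_left _ _)
  set Cf : ℝ := τ + (σmax + L) / 2 with hCf
  have hCfpos : 0 < Cf := by rw [hCf]; positivity
  have hgne' : ∀ k, blockRestr (I k) (gradf (x k)) ≠ 0 := by
    intro k h
    have h1 := hgreedy k
    have h2 : 0 < ‖gradf (x k)‖ := norm_pos_iff.2 (hgne k)
    rw [h, norm_zero] at h1
    nlinarith
  have hD : ∀ k, σ k / 6 * ‖s k‖ ^ 3 < f (x k) - Q k := by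
    intro k
    have h := model_decrease (f (x k)) (blockRestr (I k) (gradf (x k)))
      (blockHess (I k) (hessf (x k))) (hσpos k) (hgne' k) hβ0 hβ1 (s k) (hstepm k)
    rwa [quadModel_zero] at h
  have hDpos : ∀ k, 0 < f (x k) - Q k := by
    intro k
    refine lt_of_le_of_lt ?_ (hD k)
    have := (hσpos k).le
    positivity
  have hρ' : ∀ k, ρ k = (f (x k) - f (x k + blockIncl (I k) (s k))) / (f (x k) - Q k) := by
    intro k
    rw [hρ k, quadModel_zero]
  have htay : ∀ k, f (x k + blockIncl (I k) (s k)) ≤ Q k + L / 6 * ‖s k‖ ^ 3 := by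
    intro k
    have h := taylor_val f gradf hessf hgradf hhessf L hlipL (x k) (blockIncl (I k) (s k))
    rw [norm_blockIncl] at h
    have h1 : (⟪gradf (x k), blockIncl (I k) (s k)⟫ : ℝ)
        = ⟪blockRestr (I k) (gradf (x k)), s k⟫ := inner_blockIncl _ _ _
    have h2 : (⟪blockIncl (I k) (s k), hessf (x k) (blockIncl (I k) (s k))⟫ : ℝ)
        = ⟪s k, blockHess (I k) (hessf (x k)) (s k)⟫ := (inner_blockHess _ _ _).symm
    rw [h1, h2] at h
    have h3 := (abs_le.1 h).2
    simp only [hQ, quadModel]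
    linarith
  have hρge : ∀ k, L / (1 - η₂) ≤ σ k → η₂ ≤ ρ k := by
    intro k hk
    have hD1 := hD k
    have hDp := hDpos k
    have hσk := hσpos k
    have h3 : L / 6 * ‖s k‖ ^ 3 = L / σ k * (σ k / 6 * ‖s k‖ ^ 3) := by
      field_simp
    have h4 : L / σ k * (σ k / 6 * ‖s k‖ ^ 3) ≤ L / σ k * (f (x k) - Q k) := by
      apply mul_le_mul_of_nonneg_left (hD k).le
      positivity
    have h5 := htay k
    have h6 : L / σ k ≤ 1 - η₂ := by
      rw [div_le_iff₀ hσk]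
      have := (div_le_iff₀ h1η₂).1 hk
      nlinarith
    rw [hρ' k, le_div_iff₀ hDp]
    have hp := mul_le_mul_of_nonneg_right h6 hDp.le
    linarith
  have hσlow : ∀ k, σmin ≤ σ k := by
    intro k
    induction k with
    | zero => rw [hσzero]; exact hσ₀
    | succ k ih =>
      rcases lt_or_ge (ρ k) η₁ with h | h
      · have h1 := (hσ3 k h).1
        have h2 : σ k ≤ γ₂ * σ k := le_mul_of_one_le_left (hσpos k).le hγ₂.le
        exact ih.trans (h2.trans h1)
      rcases lt_or_ge (ρ k) η₂ with h2 | h2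
      · exact ih.trans (hσ2 k h h2).1
      · exact le_trans (le_max_left _ _) (hσ1 k h2).1
  have hσup : ∀ k, σ k ≤ σmax := by
    intro k
    induction k with
    | zero => rw [hσzero, hsm]; exact le_max_left _ _
    | succ k ih =>
      by_cases hk : L / (1 - η₂) ≤ σ k
      · exact ((hσ1 k (hρge k hk)).2).trans ih
      · push_neg at hk
        have hstep : σ (k + 1) ≤ γ₃ * σ k := by
          rcases lt_or_ge (ρ k) η₁ with h | h
          · exact (hσ3 k h).2
          rcases lt_or_ge (ρ k) η₂ with h2 | h2
          · exact ((hσ2 k h h2).2).trans (mul_le_mul_of_nonneg_right hγ₂₃ (hσpos k).le)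
          · exact ((hσ1 k h2).2).trans (le_mul_of_one_le_left (hσpos k).le hγ₃1.le)
        have h2 : γ₃ * σ k ≤ γ₃ * (L / (1 - η₂)) :=
          mul_le_mul_of_nonneg_left hk.le (by linarith)
        calc σ (k + 1) ≤ γ₃ * σ k := hstep
          _ ≤ γ₃ * (L / (1 - η₂)) := h2
          _ = γ₃ * L / (1 - η₂) := by ring
          _ ≤ σmax := le_max_right _ _
  have hdec : ∀ k, η₁ ≤ ρ k → η₁ * (σmin / 6 * ‖s k‖ ^ 3) ≤ f (x k) - f (x (k + 1)) := by
    intro k hk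
    rw [hx k, if_pos hk]
    have hDp := hDpos k
    have hnum : f (x k) - f (x k + blockIncl (I k) (s k)) = ρ k * (f (x k) - Q k) := by
      rw [hρ' k]
      field_simp
    have h1 : η₁ * (f (x k) - Q k) ≤ ρ k * (f (x k) - Q k) :=
      mul_le_mul_of_nonneg_right hk hDp.le
    have h2 : σmin / 6 * ‖s k‖ ^ 3 ≤ σ k / 6 * ‖s k‖ ^ 3 := by
      nlinarith [pow_nonneg (norm_nonneg (s k)) 3, hσlow k]
    have h3 : η₁ * (σmin / 6 * ‖s k‖ ^ 3) ≤ η₁ * (f (x k) - Q k) := by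
      apply mul_le_mul_of_nonneg_left _ hη₁0.le
      linarith [hD k]
    linarith
  have hmono : ∀ k, f (x (k + 1)) ≤ f (x k) := by
    intro k
    by_cases hk : η₁ ≤ ρ k
    · have h1 := hdec k hk
      have h2 : 0 ≤ η₁ * (σmin / 6 * ‖s k‖ ^ 3) := by positivity
      linarith
    · rw [hx k, if_neg hk]
  have hmono0 : ∀ k, f (x k) ≤ f (x 0) := by
    intro k
    induction k with
    | zero => exact le_refl _
    | succ k ih => exact (hmono k).trans ih
  have hfmin' : ∀ k, fmin ≤ f (x k) := fun k => hfmin _ (hmono0 k)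
  have hsb : ∀ k, η₁ ≤ ρ k → ε ≤ ‖blockRestr (I k) (gradf (x (k + 1)))‖ →
      ε ≤ Cf * ‖s k‖ ^ 2 := by
    intro k hk hεk
    rw [hx k, if_pos hk] at hεk
    have hgp : blockRestr (I k) (gradf (x k + blockIncl (I k) (s k))) =
        blockRestr (I k) (gradf (x k + blockIncl (I k) (s k)) - gradf (x k) -
          hessf (x k) (blockIncl (I k) (s k)))
        + (blockRestr (I k) (gradf (x k)) + blockHess (I k) (hessf (x k)) (s k)) := by
      rw [map_sub, map_sub, blockRestr_apply_hess]
      abel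
    have h1 : ‖blockRestr (I k) (gradf (x k + blockIncl (I k) (s k)) - gradf (x k) -
        hessf (x k) (blockIncl (I k) (s k)))‖ ≤ L / 2 * ‖s k‖ ^ 2 := by
      refine (norm_blockRestr_le _ _).trans ?_
      have h := taylor_grad gradf hessf hhessf L hlipL (x k) (blockIncl (I k) (s k))
      rwa [norm_blockIncl] at h
    have h2 : ‖blockRestr (I k) (gradf (x k)) + blockHess (I k) (hessf (x k)) (s k)‖ ≤
        (τ + σ k / 2) * ‖s k‖ ^ 2 := by
      have he : blockRestr (I k) (gradf (x k)) + blockHess (I k) (hessf (x k)) (s k)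
          = cubicModelGrad (blockRestr (I k) (gradf (x k))) (blockHess (I k) (hessf (x k)))
              (σ k) (s k) - (σ k / 2 * ‖s k‖) • (s k) := by
        rw [cubicModelGrad]
        abel
      rw [he]
      have h3 := norm_sub_le (cubicModelGrad (blockRestr (I k) (gradf (x k)))
        (blockHess (I k) (hessf (x k))) (σ k) (s k)) ((σ k / 2 * ‖s k‖) • (s k))
      have h4 : ‖(σ k / 2 * ‖s k‖) • (s k)‖ = σ k / 2 * ‖s k‖ ^ 2 := by
        rw [norm_smul, Real.norm_eq_abs, abs_of_nonneg (mul_nonneg (by linarith [hσpos k]) (norm_nonneg _))]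
        ring
      have h5 := hstepg k
      rw [h4] at h3
      calc ‖cubicModelGrad (blockRestr (I k) (gradf (x k))) (blockHess (I k) (hessf (x k)))
            (σ k) (s k) - (σ k / 2 * ‖s k‖) • (s k)‖ ≤
          τ * ‖s k‖ ^ 2 + σ k / 2 * ‖s k‖ ^ 2 := by linarith
        _ = (τ + σ k / 2) * ‖s k‖ ^ 2 := by ring
    have h6 : ‖blockRestr (I k) (gradf (x k + blockIncl (I k) (s k)))‖ ≤
        (L / 2 + τ + σ k / 2) * ‖s k‖ ^ 2 := by
      rw [hgp]
      calc ‖blockRestr (I k) (gradf (x k + blockIncl (I k) (s k)) - gradf (x k) -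
            hessf (x k) (blockIncl (I k) (s k)))
          + (blockRestr (I k) (gradf (x k)) + blockHess (I k) (hessf (x k)) (s k))‖
          ≤ _ + _ := norm_add_le _ _
        _ ≤ L / 2 * ‖s k‖ ^ 2 + (τ + σ k / 2) * ‖s k‖ ^ 2 := add_le_add h1 h2
        _ = (L / 2 + τ + σ k / 2) * ‖s k‖ ^ 2 := by ring
    have h7 : (L / 2 + τ + σ k / 2) * ‖s k‖ ^ 2 ≤ Cf * ‖s k‖ ^ 2 := by
      have := hσup k
      have hss := sq_nonneg ‖s k‖
      rw [hCf]
      nlinarith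
    exact hεk.trans (h6.trans h7)
  set δ : ℝ := η₁ * (σmin / 6) * Cf ^ (-(3 / 2 : ℝ)) * ε ^ ((3 : ℝ) / 2) with hδ
  have hεrp : (0:ℝ) < ε ^ ((3 : ℝ) / 2) := Real.rpow_pos_of_pos hε _
  have hCfrp : (0:ℝ) < Cf ^ (-(3 / 2 : ℝ)) := Real.rpow_pos_of_pos hCfpos _
  have hδpos : 0 < δ := by rw [hδ]; positivity
  have hdelta : ∀ k, ε ≤ ‖blockRestr (I k) (gradf (x (k + 1)))‖ → η₁ ≤ ρ k →
      δ ≤ f (x k) - f (x (k + 1)) := by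
    intro k hεk hk
    have h0 := hsb k hk hεk
    have ht : ε / Cf ≤ ‖s k‖ ^ 2 := (div_le_iff₀' hCfpos).2 h0
    have h5 : (ε / Cf) ^ ((3 : ℝ) / 2) ≤ ((‖s k‖ ^ 2 : ℝ)) ^ ((3 : ℝ) / 2) :=
      Real.rpow_le_rpow (by positivity) ht (by norm_num)
    have h6 : ((‖s k‖ ^ 2 : ℝ)) ^ ((3 : ℝ) / 2) = ‖s k‖ ^ 3 := by
      rw [← Real.rpow_natCast ‖s k‖ 2, ← Real.rpow_mul (norm_nonneg _)]
      rw [show ((2 : ℕ) : ℝ) * ((3 : ℝ) / 2) = ((3 : ℕ) : ℝ) by norm_num]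
      rw [Real.rpow_natCast]
    have h7 : (ε / Cf) ^ ((3 : ℝ) / 2) = ε ^ ((3 : ℝ) / 2) * Cf ^ (-(3 / 2 : ℝ)) := by
      rw [Real.div_rpow hε.le hCfpos.le, Real.rpow_neg hCfpos.le, div_eq_mul_inv]
    have h8 : ε ^ ((3 : ℝ) / 2) * Cf ^ (-(3 / 2 : ℝ)) ≤ ‖s k‖ ^ 3 := by
      rw [← h7, ← h6]
      exact h5
    have h9 := hdec k hk
    have h10 : δ ≤ η₁ * (σmin / 6 * ‖s k‖ ^ 3) := by
      rw [hδ]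
      have : η₁ * (σmin / 6) * Cf ^ (-(3 / 2 : ℝ)) * ε ^ ((3 : ℝ) / 2)
          = η₁ * (σmin / 6) * (ε ^ ((3 : ℝ) / 2) * Cf ^ (-(3 / 2 : ℝ))) := by ring
      rw [this]
      have h11 : η₁ * (σmin / 6) * (ε ^ ((3 : ℝ) / 2) * Cf ^ (-(3 / 2 : ℝ)))
          ≤ η₁ * (σmin / 6) * ‖s k‖ ^ 3 :=
        mul_le_mul_of_nonneg_left h8 (by positivity)
      calc η₁ * (σmin / 6) * (ε ^ ((3 : ℝ) / 2) * Cf ^ (-(3 / 2 : ℝ)))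
          ≤ η₁ * (σmin / 6) * ‖s k‖ ^ 3 := h11
        _ = η₁ * (σmin / 6 * ‖s k‖ ^ 3) := by ring
    linarith
  set A : Set ℕ := {k : ℕ | ε ≤ ‖blockRestr (I k) (gradf (x (k + 1)))‖} ∩ {k : ℕ | η₁ ≤ ρ k}
    with hA
  have hcount : ∀ T : Finset ℕ, ↑T ⊆ A → (T.card : ℝ) * δ ≤ f (x 0) - fmin := by
    intro T hT
    obtain ⟨N, hN⟩ := T.exists_nat_subset_range
    have h1 : (T.card : ℝ) * δ = ∑ _k ∈ T, δ := by
      rw [Finset.sum_const, nsmul_eq_mul]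
    have h2 : ∑ _k ∈ T, δ ≤ ∑ k ∈ T, (f (x k) - f (x (k + 1))) := by
      refine Finset.sum_le_sum ?_
      intro k hk
      have hkA : k ∈ A := hT hk
      exact hdelta k hkA.1 hkA.2
    have h3 : ∑ k ∈ T, (f (x k) - f (x (k + 1))) ≤
        ∑ k ∈ Finset.range N, (f (x k) - f (x (k + 1))) := by
      refine Finset.sum_le_sum_of_subset_of_nonneg hN ?_
      intro k _ _
      linarith [hmono k]
    have h4 : ∑ k ∈ Finset.range N, (f (x k) - f (x (k + 1))) = f (x 0) - f (x N) :=
      Finset.sum_range_sub' (fun k => f (x k)) N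
    have h5 := hfmin' N
    linarith
  have hfinA : A.Finite := by
    by_contra hinf
    have hinf : A.Infinite := hinf
    obtain ⟨m, hm⟩ := exists_nat_gt ((f (x 0) - fmin) / δ)
    obtain ⟨T, hTsub, hTcard⟩ := hinf.exists_subset_card_eq m
    have h1 := hcount T hTsub
    rw [hTcard] at h1
    rw [div_lt_iff₀ hδpos] at hm
    linarith
  refine ⟨hfinA, ?_⟩
  have hT := hcount hfinA.toFinset (by simp)
  rw [Set.ncard_eq_toFinset_card _ hfinA, Real.rpow_neg hε.le]
  calc ((hfinA.toFinset.card : ℕ) : ℝ) ≤ (f (x 0) - fmin) / δ := (le_div_iff₀ hδpos).2 hT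
    _ = (f (x 0) - fmin) / (η₁ * (σmin / 6) * Cf ^ (-(3 / 2 : ℝ))) * (ε ^ ((3 : ℝ) / 2))⁻¹ := by
        rw [hδ, ← div_div, div_eq_mul_inv]

end
end
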